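/- Let G = (V, E, w) be a connected weighted graph such that every set S ⊆ V with vol(S) ≤ vol(G)/2 satisfies Φ(S) ≥ c / vol(S)^{1/2 - ε} for some c > 0 and 0 < ε ≤ 1/2. Then for every pair of vertices s, t ∈ V, the effective resistance satisfies Reff(s,t) ≤ C · (deg(s)^{-2ε} + deg(t)^{-2ε}) / (ε c²) for some universal constant C. -/
import Mathlib

set_option linter.unusedSectionVars false
set_option maxHeartbeats 4000000

open Matrix BigOperators Finset

variable {V : Type*} [Fintype V] [DecidableEq V]

/-- weighted degree -/
noncomputable def deg (w : V → V → ℝ) (v : V) : ℝ := ∑ u, w v u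

/-- volume of a vertex set -/
noncomputable def vol (w : V → V → ℝ) (S : Finset V) : ℝ := ∑ v ∈ S, deg w v

/-- total weight of edges crossing the cut (S, Sᶜ) -/
noncomputable def cutW (w : V → V → ℝ) (S : Finset V) : ℝ := ∑ u ∈ S, ∑ v ∈ Sᶜ, w u v

/-- total edge weight w(E) -/
noncomputable def totalW (w : V → V → ℝ) : ℝ := (∑ u, ∑ v, w u v) / 2

/-- weighted Laplacian L = D - W -/
noncomputable def lap (w : V → V → ℝ) : Matrix V V ℝ :=
  Matrix.of fun u v => if u = v then deg w u else - w u v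

/-- the four Moore–Penrose conditions -/
def IsMoorePenrose (L Ld : Matrix V V ℝ) : Prop :=
  L * Ld * L = L ∧ Ld * L * Ld = Ld ∧ (L * Ld)ᵀ = L * Ld ∧ (Ld * L)ᵀ = Ld * L

/-- effective resistance via the pseudoinverse Ld of the Laplacian -/
noncomputable def reff (Ld : Matrix V V ℝ) (u v : V) : ℝ :=
  (Pi.single u 1 - Pi.single v 1) ⬝ᵥ (Ld *ᵥ (Pi.single u 1 - Pi.single v 1))

/-- valid symmetric nonnegative loopless weights -/
def GoodW (w : V → V → ℝ) : Prop :=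
  (∀ u v, 0 ≤ w u v) ∧ (∀ u v, w u v = w v u) ∧ (∀ v, w v v = 0)

/-- connectivity of the weighted graph -/
def Conn (w : V → V → ℝ) : Prop := (SimpleGraph.fromRel fun u v => 0 < w u v).Connected

/- ### auxiliary definitions -/

noncomputable def En (w : V → V → ℝ) (f : V → ℝ) : ℝ := (∑ u, ∑ v, w u v * (f u - f v)^2)/2
noncomputable def hAbs (w : V → V → ℝ) (f : V → ℝ) : ℝ := (∑ u, ∑ v, w u v * |f u - f v|)/2
noncomputable def lvl (f : V → ℝ) (τ : ℝ) : Finset V := univ.filter (fun v => τ < f v)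
noncomputable def psupp (f : V → ℝ) : Finset V := univ.filter (fun v => 0 < f v)

section basic
variable {w : V → V → ℝ}

lemma deg_nonneg (hw : GoodW w) (v : V) : 0 ≤ deg w v :=
  Finset.sum_nonneg fun u _ => hw.1 v u

lemma vol_nonneg (hw : GoodW w) (S : Finset V) : 0 ≤ vol w S :=
  Finset.sum_nonneg fun v _ => deg_nonneg hw v

lemma vol_mono (hw : GoodW w) {S T : Finset V} (h : S ⊆ T) : vol w S ≤ vol w T :=
  Finset.sum_le_sum_of_subset_of_nonneg h fun v _ _ => deg_nonneg hw v

lemma deg_le_vol (hw : GoodW w) {S : Finset V} {v : V} (hv : v ∈ S) : deg w v ≤ vol w S :=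
  Finset.single_le_sum (fun u _ => deg_nonneg hw u) hv

lemma cutW_nonneg (hw : GoodW w) (S : Finset V) : 0 ≤ cutW w S :=
  Finset.sum_nonneg fun u _ => Finset.sum_nonneg fun v _ => hw.1 u v

lemma En_nonneg (hw : GoodW w) (f : V → ℝ) : 0 ≤ En w f := by
  apply div_nonneg _ (by norm_num)
  exact Finset.sum_nonneg fun u _ => Finset.sum_nonneg fun v _ =>
    mul_nonneg (hw.1 u v) (sq_nonneg _)

lemma hAbs_nonneg (hw : GoodW w) (f : V → ℝ) : 0 ≤ hAbs w f := by
  apply div_nonneg _ (by norm_num)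
  exact Finset.sum_nonneg fun u _ => Finset.sum_nonneg fun v _ =>
    mul_nonneg (hw.1 u v) (abs_nonneg _)

lemma vol_add_compl (S : Finset V) : vol w S + vol w Sᶜ = vol w univ := by
  simpa [vol] using Finset.sum_add_sum_compl S (deg w)

lemma psupp_eq_lvl (f : V → ℝ) : psupp f = lvl f 0 := rfl

lemma lvl_mono (f : V → ℝ) {a b : ℝ} (h : a ≤ b) : lvl f b ⊆ lvl f a := by
  intro v hv
  simp only [lvl, mem_filter, mem_univ, true_and] at *
  linarith

end basic

/-- snap a threshold down to a function value (or 0) without changing the level set -/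
lemma snap (f : V → ℝ) (τ : ℝ) (hτ : 0 ≤ τ) :
    ∃ a ∈ insert (0:ℝ) (univ.image f), 0 ≤ a ∧ a ≤ τ ∧ lvl f a = lvl f τ := by
  set F := (insert (0:ℝ) (univ.image f)).filter (fun a => a ≤ τ) with hF
  have h0F : (0:ℝ) ∈ F := by simp [hF, hτ]
  have hne : F.Nonempty := ⟨0, h0F⟩
  refine ⟨F.max' hne, ?_, ?_, ?_, ?_⟩
  · exact (Finset.mem_filter.mp (F.max'_mem hne)).1
  · exact F.le_max' 0 h0F
  · exact (Finset.mem_filter.mp (F.max'_mem hne)).2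
  · ext v
    simp only [lvl, mem_filter, mem_univ, true_and]
    constructor
    · intro h
      by_contra hc
      push_neg at hc
      have hfv : f v ∈ F := by
        simp only [hF, Finset.mem_filter, Finset.mem_insert, Finset.mem_image]
        exact ⟨Or.inr ⟨v, mem_univ v, rfl⟩, hc⟩
      exact absurd (F.le_max' _ hfv) (not_le.mpr h)
    · intro h
      exact lt_of_le_of_lt ((Finset.mem_filter.mp (F.max'_mem hne)).2) h

variable {w : V → V → ℝ}

lemma coarea (hw : GoodW w) :
    ∀ n : ℕ, ∀ f : V → ℝ, ((psupp f).image f).card ≤ n → (∀ v, 0 ≤ f v) →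
    ∀ b κ : ℝ, 0 ≤ κ → (∀ τ, 0 ≤ τ → τ < b → κ ≤ cutW w (lvl f τ)) →
    κ * b ≤ hAbs w f := by
  intro n
  induction n with
  | zero =>
    intro f hcard hf b κ hκ hcut
    rcases le_or_gt b 0 with hb | hb
    · exact le_trans (mul_nonpos_of_nonneg_of_nonpos hκ hb) (hAbs_nonneg hw f)
    by_cases hs : (psupp f).Nonempty
    · have := Finset.card_pos.mpr (hs.image f)
      omega
    · have hS : psupp f = ∅ := Finset.not_nonempty_iff_eq_empty.mp hs
      have h0 : κ ≤ cutW w (lvl f 0) := hcut 0 le_rfl hb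
      rw [← psupp_eq_lvl, hS] at h0
      simp only [cutW, Finset.sum_empty] at h0
      have : κ = 0 := le_antisymm h0 hκ
      rw [this, zero_mul]
      exact hAbs_nonneg hw f
  | succ n ih =>
    intro f hcard hf b κ hκ hcut
    rcases le_or_gt b 0 with hb | hb
    · exact le_trans (mul_nonpos_of_nonneg_of_nonpos hκ hb) (hAbs_nonneg hw f)
    by_cases hs : (psupp f).Nonempty
    case neg =>
      have hS : psupp f = ∅ := Finset.not_nonempty_iff_eq_empty.mp hs
      have h0 : κ ≤ cutW w (lvl f 0) := hcut 0 le_rfl hb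
      rw [← psupp_eq_lvl, hS] at h0
      simp only [cutW, Finset.sum_empty] at h0
      have : κ = 0 := le_antisymm h0 hκ
      rw [this, zero_mul]
      exact hAbs_nonneg hw f
    case pos =>
    set S := psupp f with hSdef
    set A := (psupp f).image f with hA
    have hAne : A.Nonempty := hs.image f
    set α := A.min' hAne with hα
    have hαA : α ∈ A := A.min'_mem hAne
    obtain ⟨v₀, hv₀, hv₀α⟩ := Finset.mem_image.mp hαA
    have hαpos : 0 < α := hv₀α ▸ (Finset.mem_filter.mp hv₀).2
    have hmin : ∀ v, 0 < f v → α ≤ f v := fun v hv =>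
      A.min'_le _ (Finset.mem_image_of_mem f (by simp [psupp, hv]))
    have hdi : ∀ v, f v = 0 ∨ α ≤ f v := fun v => by
      rcases eq_or_lt_of_le (hf v) with h | h
      · exact Or.inl h.symm
      · exact Or.inr (hmin v h)
    set g := fun v => f v - min (f v) α with hg
    have hg0 : ∀ v, f v = 0 → g v = 0 := by
      intro v h; simp [hg, h, min_eq_left hαpos.le]
    have hg1 : ∀ v, α ≤ f v → g v = f v - α := by
      intro v h; simp [hg, min_eq_right h]
    set χ := fun v => if 0 < f v then (1:ℝ) else 0 with hχ
    have hSmem : ∀ u, u ∈ S ↔ 0 < f u := by intro u; simp [hSdef, psupp]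
    have hScmem : ∀ u, u ∈ Sᶜ ↔ ¬ 0 < f u := by intro u; simp [hSdef, psupp]
    have key : ∀ u v : V, α * |χ u - χ v| + |g u - g v| ≤ |f u - f v| := by
      intro u v
      rcases hdi u with hu | hu <;> rcases hdi v with hv | hv
      · have c1 : χ u = 0 := if_neg (by rw [hu]; exact lt_irrefl 0)
        have c2 : χ v = 0 := if_neg (by rw [hv]; exact lt_irrefl 0)
        rw [c1, c2, hg0 u hu, hg0 v hv, hu, hv]; simp
      · have c1 : χ u = 0 := if_neg (by rw [hu]; exact lt_irrefl 0)
        have c2 : χ v = 1 := if_pos (by linarith)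
        rw [c1, c2, hg0 u hu, hg1 v hv, hu]
        rw [show |(0:ℝ) - 1| = 1 by norm_num, show (0:ℝ) - (f v - α) = -(f v - α) by ring,
          abs_neg, abs_of_nonneg (by linarith : (0:ℝ) ≤ f v - α),
          show (0:ℝ) - f v = -(f v) by ring, abs_neg, abs_of_nonneg (by linarith : (0:ℝ) ≤ f v)]
        linarith
      · have c1 : χ u = 1 := if_pos (by linarith)
        have c2 : χ v = 0 := if_neg (by rw [hv]; exact lt_irrefl 0)
        rw [c1, c2, hg1 u hu, hg0 v hv, hv]
        rw [show |(1:ℝ) - 0| = 1 by norm_num, sub_zero, sub_zero,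
          abs_of_nonneg (by linarith : (0:ℝ) ≤ f u - α),
          abs_of_nonneg (by linarith : (0:ℝ) ≤ f u)]
        linarith
      · have c1 : χ u = 1 := if_pos (by linarith)
        have c2 : χ v = 1 := if_pos (by linarith)
        rw [c1, c2, hg1 u hu, hg1 v hv]
        rw [show (f u - α) - (f v - α) = f u - f v by ring]
        simp
    have hχsum : ∑ u, ∑ v, w u v * |χ u - χ v| = 2 * cutW w S := by
      rw [← Finset.sum_add_sum_compl S (fun u => ∑ v, w u v * |χ u - χ v|)]
      have e1 : ∑ u ∈ S, ∑ v, w u v * |χ u - χ v| = ∑ u ∈ S, ∑ v ∈ Sᶜ, w u v := by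
        refine Finset.sum_congr rfl (fun u hu => ?_)
        rw [← Finset.sum_add_sum_compl S (fun v => w u v * |χ u - χ v|)]
        have p1 : ∑ v ∈ S, w u v * |χ u - χ v| = 0 :=
          Finset.sum_eq_zero (fun v hv => by
            rw [hχ]; simp only []
            rw [if_pos ((hSmem u).mp hu), if_pos ((hSmem v).mp hv)]; simp)
        have p2 : ∑ v ∈ Sᶜ, w u v * |χ u - χ v| = ∑ v ∈ Sᶜ, w u v :=
          Finset.sum_congr rfl (fun v hv => by
            rw [hχ]; simp only []
            rw [if_pos ((hSmem u).mp hu), if_neg ((hScmem v).mp hv)]; simp)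
        rw [p1, p2, zero_add]
      have e2 : ∑ u ∈ Sᶜ, ∑ v, w u v * |χ u - χ v| = ∑ u ∈ Sᶜ, ∑ v ∈ S, w u v := by
        refine Finset.sum_congr rfl (fun u hu => ?_)
        rw [← Finset.sum_add_sum_compl S (fun v => w u v * |χ u - χ v|)]
        have p1 : ∑ v ∈ S, w u v * |χ u - χ v| = ∑ v ∈ S, w u v :=
          Finset.sum_congr rfl (fun v hv => by
            rw [hχ]; simp only []
            rw [if_neg ((hScmem u).mp hu), if_pos ((hSmem v).mp hv)]; simp)
        have p2 : ∑ v ∈ Sᶜ, w u v * |χ u - χ v| = 0 :=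
          Finset.sum_eq_zero (fun v hv => by
            rw [hχ]; simp only []
            rw [if_neg ((hScmem u).mp hu), if_neg ((hScmem v).mp hv)]; simp)
        rw [p1, p2, add_zero]
      rw [e1, e2]
      have e3 : ∑ u ∈ Sᶜ, ∑ v ∈ S, w u v = cutW w S := by
        rw [Finset.sum_comm]
        refine Finset.sum_congr rfl (fun v hv => Finset.sum_congr rfl (fun u hu => hw.2.1 u v))
      rw [e3]; rw [cutW]; ring
    have hmain : α * cutW w S + hAbs w g ≤ hAbs w f := by
      have hsum : ∑ u, ∑ v, w u v * (α * |χ u - χ v| + |g u - g v|)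
          ≤ ∑ u, ∑ v, w u v * |f u - f v| :=
        Finset.sum_le_sum (fun u _ => Finset.sum_le_sum (fun v _ =>
          mul_le_mul_of_nonneg_left (key u v) (hw.1 u v)))
      have hdist : ∑ u, ∑ v, w u v * (α * |χ u - χ v| + |g u - g v|)
          = α * (∑ u, ∑ v, w u v * |χ u - χ v|) + ∑ u, ∑ v, w u v * |g u - g v| := by
        rw [Finset.mul_sum]
        rw [← Finset.sum_add_distrib]
        refine Finset.sum_congr rfl (fun u _ => ?_)
        rw [Finset.mul_sum, ← Finset.sum_add_distrib]
        exact Finset.sum_congr rfl (fun v _ => by ring)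
      rw [hdist, hχsum] at hsum
      simp only [hAbs]
      linarith
    have hcut0 : κ ≤ cutW w S := by
      have := hcut 0 le_rfl hb
      rwa [← psupp_eq_lvl] at this
    rcases le_or_gt b α with hbα | hbα
    · have h1 : κ * b ≤ κ * α := mul_le_mul_of_nonneg_left hbα hκ
      have h2 : κ * α ≤ α * cutW w S := by
        rw [mul_comm]; exact mul_le_mul_of_nonneg_left hcut0 hαpos.le
      have h3 := hAbs_nonneg hw g
      linarith
    · set B := (psupp g).image g with hB
      have hBsub : B.image (· + α) ⊆ A.erase α := by
        intro y hy
        obtain ⟨x, hx, hxy⟩ := Finset.mem_image.mp hy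
        obtain ⟨v, hv, hvx⟩ := Finset.mem_image.mp hx
        have hgv : 0 < g v := (Finset.mem_filter.mp hv).2
        have hαfv : α < f v := by
          rcases hdi v with h | h
          · rw [hg0 v h] at hgv; exact absurd hgv (lt_irrefl 0)
          · have h2 := hg1 v h; rw [h2] at hgv; linarith
        have hyfv : y = f v := by
          rw [← hxy, ← hvx, hg1 v hαfv.le]; ring
        rw [hyfv]
        refine Finset.mem_erase.mpr ⟨by linarith [hαfv], ?_⟩
        exact Finset.mem_image_of_mem f (by simp only [psupp, mem_filter, mem_univ, true_and]; linarith)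
      have hBcard : B.card ≤ n := by
        have h1 : (B.image (· + α)).card = B.card :=
          Finset.card_image_of_injective B (add_left_injective α)
        have h2 : (B.image (· + α)).card ≤ (A.erase α).card := Finset.card_le_card hBsub
        have h3 : (A.erase α).card = A.card - 1 := Finset.card_erase_of_mem hαA
        have h4 : 1 ≤ A.card := Finset.card_pos.mpr hAne
        omega
      have hgnn : ∀ v, 0 ≤ g v := fun v => sub_nonneg.mpr (min_le_left _ _)
      have hlvlg : ∀ τ, 0 ≤ τ → lvl g τ = lvl f (τ + α) := by
        intro τ hτ
        ext v
        simp only [lvl, mem_filter, mem_univ, true_and]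
        rcases hdi v with h | h
        · rw [hg0 v h, h]
          constructor <;> intro <;> linarith
        · rw [hg1 v h]
          constructor <;> intro <;> linarith
      have hcutg : ∀ τ, 0 ≤ τ → τ < b - α → κ ≤ cutW w (lvl g τ) := by
        intro τ hτ hτb
        rw [hlvlg τ hτ]
        exact hcut (τ + α) (by linarith) (by linarith)
      have hIH := ih g hBcard hgnn (b - α) κ hκ hcutg
      have h2 : κ * α ≤ α * cutW w S := by
        rw [mul_comm]; exact mul_le_mul_of_nonneg_left hcut0 hαpos.le
      have hr : κ * b = κ * α + κ * (b - α) := by ring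
      linarith

lemma cs_energy (hw : GoodW w) (f : V → ℝ) (hf : ∀ v, 0 ≤ f v) :
    (hAbs w f)^2 ≤ En w f * vol w (psupp f) := by
  classical
  set F : V × V → ℝ := fun p => Real.sqrt (w p.1 p.2) * |f p.1 - f p.2| with hFdef
  set G : V × V → ℝ := fun p => Real.sqrt (w p.1 p.2) * (if f p.1 = f p.2 then 0 else 1) with hGdef
  have hCS := Finset.sum_mul_sq_le_sq_mul_sq Finset.univ F G
  have hFG : ∀ p : V × V, F p * G p = w p.1 p.2 * |f p.1 - f p.2| := by
    intro p
    by_cases h : f p.1 = f p.2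
    · simp [hFdef, hGdef, h]
    · rw [hFdef, hGdef]; simp only [if_neg h, mul_one]
      rw [show Real.sqrt (w p.1 p.2) * |f p.1 - f p.2| * Real.sqrt (w p.1 p.2)
        = (Real.sqrt (w p.1 p.2) * Real.sqrt (w p.1 p.2)) * |f p.1 - f p.2| by ring,
        Real.mul_self_sqrt (hw.1 p.1 p.2)]
  have hF2 : ∀ p : V × V, F p ^ 2 = w p.1 p.2 * (f p.1 - f p.2)^2 := by
    intro p
    rw [hFdef]; simp only []
    rw [mul_pow, Real.sq_sqrt (hw.1 p.1 p.2), sq_abs]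
  have hG2 : ∀ p : V × V, G p ^ 2 ≤ w p.1 p.2 *
      ((if 0 < f p.1 then (1:ℝ) else 0) + (if 0 < f p.2 then (1:ℝ) else 0)) := by
    intro p
    rw [hGdef]; simp only []
    rw [mul_pow, Real.sq_sqrt (hw.1 p.1 p.2)]
    by_cases h : f p.1 = f p.2
    · rw [if_pos h]
      have h0 : (0:ℝ)^2 = 0 := by norm_num
      rw [h0, mul_zero]
      apply mul_nonneg (hw.1 p.1 p.2)
      positivity
    · rw [if_neg h]
      apply mul_le_mul_of_nonneg_left _ (hw.1 p.1 p.2)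
      have hpos : 0 < f p.1 ∨ 0 < f p.2 := by
        rcases eq_or_lt_of_le (hf p.1) with h1 | h1
        · rcases eq_or_lt_of_le (hf p.2) with h2 | h2
          · exact absurd (h1.symm.trans h2.symm.symm) h
          · exact Or.inr h2
        · exact Or.inl h1
      rcases hpos with hp | hp
      · rw [if_pos hp]
        have : (0:ℝ) ≤ if 0 < f p.2 then (1:ℝ) else 0 := by positivity
        norm_num; linarith
      · rw [if_pos hp]
        have : (0:ℝ) ≤ if 0 < f p.1 then (1:ℝ) else 0 := by positivity
        norm_num; linarith
  have s1 : ∑ p : V × V, F p * G p = 2 * hAbs w f := by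
    rw [Fintype.sum_prod_type]
    simp only [hFG]
    rw [hAbs]; ring
  have s2 : ∑ p : V × V, F p ^ 2 = 2 * En w f := by
    rw [Fintype.sum_prod_type]
    simp only [hF2]
    rw [En]; ring
  have s3 : ∑ p : V × V, G p ^ 2 ≤ 2 * vol w (psupp f) := by
    have hle : ∑ p : V × V, G p ^ 2 ≤ ∑ p : V × V, w p.1 p.2 *
        ((if 0 < f p.1 then (1:ℝ) else 0) + (if 0 < f p.2 then (1:ℝ) else 0)) :=
      Finset.sum_le_sum (fun p _ => hG2 p)
    refine le_trans hle ?_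
    rw [Fintype.sum_prod_type]
    have expand : ∑ u, ∑ v, w u v * ((if 0 < f u then (1:ℝ) else 0) + (if 0 < f v then (1:ℝ) else 0))
        = (∑ u, ∑ v, w u v * (if 0 < f u then (1:ℝ) else 0))
          + ∑ u, ∑ v, w u v * (if 0 < f v then (1:ℝ) else 0) := by
      rw [← Finset.sum_add_distrib]
      refine Finset.sum_congr rfl (fun u _ => ?_)
      rw [← Finset.sum_add_distrib]
      exact Finset.sum_congr rfl (fun v _ => by ring)
    rw [expand]
    have t1 : ∑ u, ∑ v, w u v * (if 0 < f u then (1:ℝ) else 0) = vol w (psupp f) := by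
      have e : ∀ u, ∑ v, w u v * (if 0 < f u then (1:ℝ) else 0)
          = if 0 < f u then deg w u else 0 := by
        intro u
        by_cases h : 0 < f u
        · simp only [if_pos h, mul_one, deg]
        · simp only [if_neg h, mul_zero, Finset.sum_const_zero]
      simp only [e]
      rw [vol]
      exact (Finset.sum_filter _ _).symm
    have t2 : ∑ u, ∑ v, w u v * (if 0 < f v then (1:ℝ) else 0) = vol w (psupp f) := by
      rw [Finset.sum_comm]
      have e : ∀ v, ∑ u, w u v * (if 0 < f v then (1:ℝ) else 0)
          = if 0 < f v then deg w v else 0 := by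
        intro v
        by_cases h : 0 < f v
        · simp only [if_pos h, mul_one, deg]
          exact Finset.sum_congr rfl (fun u _ => hw.2.1 u v)
        · simp only [if_neg h, mul_zero, Finset.sum_const_zero]
      simp only [e]
      rw [vol]
      exact (Finset.sum_filter _ _).symm
    rw [t1, t2]; linarith
  rw [s1, s2] at hCS
  have hEn := En_nonneg hw f
  nlinarith [hCS, s3, mul_le_mul_of_nonneg_left s3 (by linarith : (0:ℝ) ≤ 2 * En w f)]

lemma shell (hw : GoodW w) (f : V → ℝ) (hf : ∀ v, 0 ≤ f v) {b κ W : ℝ}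
    (hκ : 0 ≤ κ) (hb : 0 ≤ b)
    (hcut : ∀ τ, 0 ≤ τ → τ < b → κ ≤ cutW w (lvl f τ)) (hW : vol w (psupp f) ≤ W) :
    (κ*b)^2 ≤ En w f * W := by
  have h1 := coarea hw ((psupp f).image f).card f le_rfl hf b κ hκ hcut
  have h2 := cs_energy hw f hf
  have h3 : (κ*b)^2 ≤ (hAbs w f)^2 := pow_le_pow_left₀ (mul_nonneg hκ hb) h1 2
  have h4 : En w f * vol w (psupp f) ≤ En w f * W :=
    mul_le_mul_of_nonneg_left hW (En_nonneg hw f)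
  linarith

lemma harm_cs {x y X Y a b : ℝ} (ha : 0 < a) (hb : 0 < b) (hX : 0 ≤ X) (hY : 0 ≤ Y)
    (h1 : x^2 ≤ X*a) (h2 : y^2 ≤ Y*b) : (x+y)^2 ≤ (X+Y)*(a+b) := by
  have hxy : 2*(x*y) ≤ X*b + Y*a := by
    rcases le_total (x*y) 0 with h | h
    · have q1 : 0 ≤ X*b := mul_nonneg hX hb.le
      have q2 : 0 ≤ Y*a := mul_nonneg hY ha.le
      linarith
    · have e1 : (x*y)^2 ≤ (X*a)*(Y*b) := by
        have := mul_le_mul h1 h2 (sq_nonneg y) (by positivity)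
        calc (x*y)^2 = x^2 * y^2 := by ring
          _ ≤ (X*a)*(Y*b) := this
      have hsq : (2*(x*y))^2 ≤ (X*b + Y*a)^2 := by
        nlinarith [sq_nonneg (X*b - Y*a)]
      have h2' : (0:ℝ) ≤ X*b + Y*a := by positivity
      nlinarith [hsq]
  nlinarith [h1, h2, hxy]

section rpowfacts
variable {ε : ℝ}

lemma q_gt_one (hε : 0 < ε) : 1 < (4:ℝ)^ε := by
  rw [Real.one_lt_rpow_iff_of_pos (by norm_num : (0:ℝ) < 4)]
  exact Or.inl ⟨by norm_num, hε⟩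

lemma four_rpow_half : (4:ℝ) ^ ((1:ℝ)/2) = 2 := by
  rw [show (4:ℝ) = (2:ℝ)^(2:ℕ) by norm_num, ← Real.rpow_natCast 2 2,
    ← Real.rpow_mul (by norm_num : (0:ℝ) ≤ 2)]
  norm_num

lemma q_le_two (hε2 : ε ≤ 1/2) : (4:ℝ)^ε ≤ 2 := by
  have := Real.rpow_le_rpow_of_exponent_le (by norm_num : (1:ℝ) ≤ 4) hε2
  rwa [four_rpow_half] at this

lemma two_rpow_twoeps : (2:ℝ)^(2*ε) = (4:ℝ)^ε := by
  rw [show (4:ℝ) = (2:ℝ)^(2:ℕ) by norm_num, ← Real.rpow_natCast 2 2,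
    ← Real.rpow_mul (by norm_num : (0:ℝ) ≤ 2)]
  norm_num

lemma pow_half_split {c x : ℝ} (hx : 0 < x) :
    (c * (x/2)^((1:ℝ)/2+ε))^2 = c^2 * ((x/2) * (x^(2*ε)/(4:ℝ)^ε)) := by
  rw [mul_pow]
  congr 1
  rw [← Real.rpow_natCast ((x/2)^((1:ℝ)/2+ε)) 2,
    ← Real.rpow_mul (by positivity : (0:ℝ) ≤ x/2),
    show ((1:ℝ)/2+ε)*((2:ℕ):ℝ) = 1 + 2*ε by push_cast; ring,
    Real.rpow_add (by positivity : (0:ℝ) < x/2), Real.rpow_one]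
  congr 1
  rw [Real.div_rpow hx.le (by norm_num : (0:ℝ) ≤ 2), two_rpow_twoeps]

end rpowfacts
variable {c ε : ℝ}

lemma main_ind (hw : GoodW w) (hc : 0 < c) (hε : 0 < ε) (hε2 : ε ≤ 1/2)
    (Hc : ∀ S : Finset V, S.Nonempty → vol w S ≤ vol w univ / 2 →
      c * vol w S ^ ((1:ℝ)/2 + ε) ≤ cutW w S) :
    ∀ n : ℕ, ∀ f : V → ℝ, (psupp f).card ≤ n → (∀ v, 0 ≤ f v) →
    ∀ s : V, 0 < f s →
    0 < vol w (univ.filter (fun v => f s ≤ f v)) →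
    (∀ τ, 0 ≤ τ → τ < f s → vol w (lvl f τ) ≤ vol w univ / 2) →
    (f s)^2 ≤ En w f * (4 * ((4:ℝ)^ε * (vol w (univ.filter (fun v => f s ≤ f v)) ^ (2*ε))⁻¹
      - (vol w (lvl f 0) ^ (2*ε))⁻¹) / (c^2 * ((4:ℝ)^ε - 1))) := by
  have hq1 : 1 < (4:ℝ)^ε := q_gt_one hε
  have hq2 : (4:ℝ)^ε ≤ 2 := q_le_two hε2
  have hqpos : 0 < (4:ℝ)^ε := by linarith
  set q := (4:ℝ)^ε with hqdef
  intro n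
  induction n with
  | zero =>
    intro f hcard hf s hfs hm hlvl
    exfalso
    have : s ∈ psupp f := by simp [psupp, hfs]
    have := Finset.card_pos.mpr ⟨s, this⟩
    omega
  | succ n ih =>
    intro f hcard hf s hfs hm hlvl
    set M := univ.filter (fun v => f s ≤ f v) with hMdef
    set m := vol w M with hmdef
    set V₀ := vol w (lvl f 0) with hV₀def
    have hsM : s ∈ M := by simp [hMdef]
    have hMsub : ∀ τ, 0 ≤ τ → τ < f s → M ⊆ lvl f τ := by
      intro τ h0 hτ v hv
      have := (Finset.mem_filter.mp hv).2
      simp only [lvl, mem_filter, mem_univ, true_and]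
      linarith
    have hmV₀ : m ≤ V₀ := vol_mono hw (hMsub 0 le_rfl hfs)
    have hV₀pos : 0 < V₀ := lt_of_lt_of_le hm hmV₀
    have hslvl : ∀ τ, τ < f s → s ∈ lvl f τ := by
      intro τ hτ; simp only [lvl, mem_filter, mem_univ, true_and]; exact hτ
    have hder : ∀ τ, 0 ≤ τ → τ < f s → c * vol w (lvl f τ) ^ ((1:ℝ)/2+ε) ≤ cutW w (lvl f τ) :=
      fun τ h0 hτ => Hc _ ⟨s, hslvl τ hτ⟩ (hlvl τ h0 hτ)
    -- positive rpow quantities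
    have hV2e : 0 < V₀ ^ (2*ε) := Real.rpow_pos_of_pos hV₀pos _
    have hm2e : 0 < m ^ (2*ε) := Real.rpow_pos_of_pos hm _
    have hmuV₀ : (V₀ ^ (2*ε))⁻¹ ≤ (m ^ (2*ε))⁻¹ := by
      apply inv_anti₀ hm2e
      exact Real.rpow_le_rpow (le_of_lt hm) hmV₀ (by linarith)
    set κ := c * (V₀/2) ^ ((1:ℝ)/2+ε) with hκdef
    have hκnn : 0 ≤ κ := mul_nonneg hc.le (Real.rpow_nonneg (by linarith) _)
    have hκsq : κ^2 = c^2 * ((V₀/2) * (V₀^(2*ε)/q)) := pow_half_split hV₀pos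
    have hcden : 0 < c^2 * (q - 1) := by
      have : 0 < c^2 := by positivity
      nlinarith
    by_cases hex : ∃ a ∈ insert (0:ℝ) (univ.image f),
        0 ≤ a ∧ a < f s ∧ vol w (lvl f a) ≤ V₀/2
    case neg =>
      -- all level sets below f s are large
      have hbig : ∀ τ, 0 ≤ τ → τ < f s → V₀/2 < vol w (lvl f τ) := by
        intro τ h0 hτ
        by_contra hcon
        push_neg at hcon
        obtain ⟨a, haF, ha0, haτ, halvl⟩ := snap f τ h0
        exact hex ⟨a, haF, ha0, lt_of_le_of_lt haτ hτ, by rw [halvl]; exact hcon⟩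
      have hκcut : ∀ τ, 0 ≤ τ → τ < f s → κ ≤ cutW w (lvl f τ) := by
        intro τ h0 hτ
        refine le_trans ?_ (hder τ h0 hτ)
        exact mul_le_mul_of_nonneg_left
          (Real.rpow_le_rpow (by linarith) (hbig τ h0 hτ).le (by linarith)) hc.le
      have hshell := shell hw f hf hκnn hfs.le hκcut (le_of_eq (by rw [psupp_eq_lvl]))
      -- (κ * f s)^2 ≤ En w f * V₀
      have hsh2 : c^2 * ((V₀/2) * (V₀^(2*ε)/q)) * (f s)^2 ≤ En w f * V₀ := by
        calc c^2 * ((V₀/2) * (V₀^(2*ε)/q)) * (f s)^2 = κ^2 * (f s)^2 := by rw [hκsq]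
          _ = (κ * f s)^2 := by ring
          _ ≤ En w f * V₀ := hshell
      have hEnn := En_nonneg hw f
      have t2 : c^2 * V₀^(2*ε) * (f s)^2 ≤ 4 * En w f := by
        have e : (2*q) * (c^2 * ((V₀/2) * (V₀^(2*ε)/q)) * (f s)^2)
            = (c^2 * V₀^(2*ε) * (f s)^2) * V₀ / V₀ * V₀ := by
          field_simp
        have h1 : (c^2 * V₀^(2*ε) * (f s)^2) * V₀ ≤ (2*q) * (En w f * V₀) := by
          have := mul_le_mul_of_nonneg_left hsh2 (by linarith : (0:ℝ) ≤ 2*q)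
          calc (c^2 * V₀^(2*ε) * (f s)^2) * V₀
              = (2*q) * (c^2 * ((V₀/2) * (V₀^(2*ε)/q)) * (f s)^2) := by field_simp
            _ ≤ (2*q) * (En w f * V₀) := this
        have h2 : c^2 * V₀^(2*ε) * (f s)^2 ≤ 2 * q * En w f :=
          le_of_mul_le_mul_right (by nlinarith [h1]) hV₀pos
        nlinarith [h2, hEnn]
      -- conclude
      have hqmu : (q - 1) * (V₀ ^ (2*ε))⁻¹ ≤ q * (m ^ (2*ε))⁻¹ - (V₀ ^ (2*ε))⁻¹ := by
        have : (V₀ ^ (2*ε))⁻¹ ≤ (m ^ (2*ε))⁻¹ := hmuV₀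
        nlinarith [this]
      have hcne : c ≠ 0 := hc.ne'
      have hqne : q - 1 ≠ 0 := by linarith
      have hVne : V₀ ^ (2*ε) ≠ 0 := hV2e.ne'
      have step : (f s)^2 ≤ En w f * (4 * ((q-1) * (V₀ ^ (2*ε))⁻¹) / (c^2 * (q - 1))) := by
        rw [← sub_nonneg]
        have key : (f s)^2 * c^2 * V₀^(2*ε) ≤ 4 * En w f := by nlinarith [t2]
        have e2 : En w f * (4 * ((q-1) * (V₀ ^ (2*ε))⁻¹) / (c^2 * (q - 1))) - (f s)^2
            = (4 * En w f - (f s)^2 * c^2 * V₀^(2*ε)) * ((V₀ ^ (2*ε))⁻¹ / c^2) := by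
          field_simp
        rw [e2]
        apply mul_nonneg (by linarith)
        positivity
      refine le_trans step ?_
      apply mul_le_mul_of_nonneg_left _ (En_nonneg hw f)
      have h4 : 4 * ((q-1) * (V₀ ^ (2*ε))⁻¹) ≤ 4 * (q * (m ^ (2*ε))⁻¹ - (V₀ ^ (2*ε))⁻¹) := by
        linarith [hqmu]
      exact (div_le_div_iff_of_pos_right hcden).mpr h4
    case pos =>
      obtain ⟨a₀, ha₀F, ha₀0, ha₀h, ha₀vol⟩ := hex
      set FF := (insert (0:ℝ) (univ.image f)).filter
        (fun a => 0 ≤ a ∧ a < f s ∧ vol w (lvl f a) ≤ V₀/2) with hFFdef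
      have hFFne : FF.Nonempty := ⟨a₀, Finset.mem_filter.mpr ⟨ha₀F, ha₀0, ha₀h, ha₀vol⟩⟩
      set τ₁ := FF.min' hFFne with hτ₁def
      have hτ₁mem := Finset.mem_filter.mp (FF.min'_mem hFFne)
      have hτ₁0 : 0 ≤ τ₁ := hτ₁mem.2.1
      have hτ₁h : τ₁ < f s := hτ₁mem.2.2.1
      have hτ₁vol : vol w (lvl f τ₁) ≤ V₀/2 := hτ₁mem.2.2.2
      have hτ₁pos : 0 < τ₁ := by
        rcases eq_or_lt_of_le hτ₁0 with h0 | h0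
        · exfalso
          have hcontra : vol w (lvl f 0) ≤ V₀/2 := by rw [h0]; exact hτ₁vol
          rw [← hV₀def] at hcontra
          linarith
        · exact h0
      have hbig : ∀ τ, 0 ≤ τ → τ < τ₁ → V₀/2 < vol w (lvl f τ) := by
        intro τ h0 hτ
        by_contra hcon
        push_neg at hcon
        obtain ⟨a, haF, ha0, haτ, halvl⟩ := snap f τ h0
        have haFF : a ∈ FF :=
          Finset.mem_filter.mpr ⟨haF, ha0, by linarith, by rw [halvl]; exact hcon⟩
        have := FF.min'_le a haFF
        linarith
      set g := fun v => min (f v) τ₁ with hgdef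
      set f' := fun v => f v - min (f v) τ₁ with hf'def
      have hmaxf' : ∀ x : ℝ, x - min x τ₁ = max (x - τ₁) 0 := by
        intro x
        rcases le_total x τ₁ with h | h
        · rw [min_eq_left h, max_eq_right (by linarith : x - τ₁ ≤ 0), sub_self]
        · rw [min_eq_right h, max_eq_left (by linarith : (0:ℝ) ≤ x - τ₁)]
      have hEsplit : En w g + En w f' ≤ En w f := by
        have key : ∀ u v : V, w u v * (g u - g v)^2 + w u v * (f' u - f' v)^2
            ≤ w u v * (f u - f v)^2 := by
          intro u v
          have hadd : f u - f v = (g u - g v) + (f' u - f' v) := by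
            simp only [hgdef, hf'def]; ring
          have hsign : 0 ≤ (g u - g v) * (f' u - f' v) := by
            rcases le_total (f u) (f v) with hle | hle
            · have h1 : g u ≤ g v := min_le_min hle le_rfl
              have h2 : f' u ≤ f' v := by
                simp only [hf'def, hmaxf']
                exact max_le_max (by linarith) le_rfl
              nlinarith [mul_nonneg (sub_nonneg.mpr h1) (sub_nonneg.mpr h2)]
            · have h1 : g v ≤ g u := min_le_min hle le_rfl
              have h2 : f' v ≤ f' u := by
                simp only [hf'def, hmaxf']
                exact max_le_max (by linarith) le_rfl
              nlinarith [mul_nonneg (sub_nonneg.mpr h1) (sub_nonneg.mpr h2)]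
          have hper : (g u - g v)^2 + (f' u - f' v)^2 ≤ (f u - f v)^2 := by
            rw [hadd]; nlinarith [hsign]
          nlinarith [mul_le_mul_of_nonneg_left hper (hw.1 u v)]
        have hsum : ∑ u, ∑ v, (w u v * (g u - g v)^2 + w u v * (f' u - f' v)^2)
            ≤ ∑ u, ∑ v, w u v * (f u - f v)^2 :=
          Finset.sum_le_sum (fun u _ => Finset.sum_le_sum (fun v _ => key u v))
        have hsplit2 : ∑ u, ∑ v, (w u v * (g u - g v)^2 + w u v * (f' u - f' v)^2)
            = (∑ u, ∑ v, w u v * (g u - g v)^2) + ∑ u, ∑ v, w u v * (f' u - f' v)^2 := by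
          rw [← Finset.sum_add_distrib]
          exact Finset.sum_congr rfl (fun u _ => by rw [← Finset.sum_add_distrib])
        simp only [En]
        rw [hsplit2] at hsum
        linarith
      have hgnn : ∀ v, 0 ≤ g v := fun v => le_min (hf v) hτ₁pos.le
      have hlvlg : ∀ τ, 0 ≤ τ → τ < τ₁ → lvl g τ = lvl f τ := by
        intro τ h0 hτ
        ext v
        simp only [lvl, mem_filter, mem_univ, true_and, hgdef]
        constructor
        · intro hlt; exact lt_of_lt_of_le hlt (min_le_left _ _)
        · intro hlt; exact lt_min hlt hτ
      have hκcut : ∀ τ, 0 ≤ τ → τ < τ₁ → κ ≤ cutW w (lvl g τ) := by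
        intro τ h0 hτ
        rw [hlvlg τ h0 hτ]
        refine le_trans ?_ (hder τ h0 (lt_trans hτ hτ₁h))
        exact mul_le_mul_of_nonneg_left
          (Real.rpow_le_rpow (by linarith) (hbig τ h0 hτ).le (by linarith)) hc.le
      have hpsg : psupp g = lvl f 0 := by
        ext v
        simp only [psupp, lvl, mem_filter, mem_univ, true_and, hgdef, lt_min_iff]
        constructor
        · exact fun h => h.1
        · exact fun h => ⟨h, hτ₁pos⟩
      have hshellg := shell hw g hgnn hκnn hτ₁pos.le hκcut (le_of_eq (by rw [hpsg]))
      have hEgnn := En_nonneg hw g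
      have hsh2 : c^2 * ((V₀/2) * (V₀^(2*ε)/q)) * τ₁^2 ≤ En w g * V₀ := by
        calc c^2 * ((V₀/2) * (V₀^(2*ε)/q)) * τ₁^2 = κ^2 * τ₁^2 := by rw [hκsq]
          _ = (κ * τ₁)^2 := by ring
          _ ≤ En w g * V₀ := hshellg
      have t2 : c^2 * V₀^(2*ε) * τ₁^2 ≤ 4 * En w g := by
        have h1 : (c^2 * V₀^(2*ε) * τ₁^2) * V₀ ≤ (2*q) * (En w g * V₀) := by
          have hmul := mul_le_mul_of_nonneg_left hsh2 (by linarith : (0:ℝ) ≤ 2*q)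
          calc (c^2 * V₀^(2*ε) * τ₁^2) * V₀
              = (2*q) * (c^2 * ((V₀/2) * (V₀^(2*ε)/q)) * τ₁^2) := by field_simp
            _ ≤ (2*q) * (En w g * V₀) := hmul
        have h2 : c^2 * V₀^(2*ε) * τ₁^2 ≤ 2 * q * En w g :=
          le_of_mul_le_mul_right (by nlinarith [h1]) hV₀pos
        nlinarith [h2, hEgnn]
      have hcne : c ≠ 0 := hc.ne'
      have hqne : q - 1 ≠ 0 := by linarith
      have hVne : V₀ ^ (2*ε) ≠ 0 := hV2e.ne'
      have hEg : τ₁^2 ≤ En w g * (4 / (c^2 * V₀^(2*ε))) := by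
        rw [← sub_nonneg]
        have e2 : En w g * (4 / (c^2 * V₀^(2*ε))) - τ₁^2
            = (4 * En w g - c^2 * V₀^(2*ε) * τ₁^2) * ((V₀ ^ (2*ε))⁻¹ / c^2) := by
          field_simp
        rw [e2]
        exact mul_nonneg (by linarith) (by positivity)
      have hf'nn : ∀ v, 0 ≤ f' v := fun v => sub_nonneg.mpr (min_le_left _ _)
      have hf's : f' s = f s - τ₁ := by
        simp only [hf'def]; rw [min_eq_right hτ₁h.le]
      have hf'spos : 0 < f' s := by rw [hf's]; linarith
      have hlvlf' : ∀ τ, 0 ≤ τ → lvl f' τ = lvl f (τ + τ₁) := by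
        intro τ h0
        ext v
        simp only [lvl, mem_filter, mem_univ, true_and, hf'def]
        rcases le_total (f v) τ₁ with hle | hle
        · rw [min_eq_left hle, sub_self]
          constructor <;> intro h <;> linarith
        · rw [min_eq_right hle]
          constructor <;> intro h <;> linarith
      have hpsf' : psupp f' = lvl f τ₁ := by
        rw [psupp_eq_lvl, hlvlf' 0 le_rfl, zero_add]
      have hcardf' : (psupp f').card ≤ n := by
        have hss : lvl f τ₁ ⊂ lvl f 0 := by
          rw [Finset.ssubset_iff_subset_ne]
          refine ⟨lvl_mono f hτ₁pos.le, ?_⟩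
          intro heq
          rw [heq, ← hV₀def] at hτ₁vol
          linarith
        have hlt := Finset.card_lt_card hss
        have hc1 : (psupp f).card ≤ n + 1 := hcard
        rw [psupp_eq_lvl] at hc1
        rw [hpsf']
        omega
      have hM' : univ.filter (fun v => f' s ≤ f' v) = M := by
        ext v
        simp only [hMdef, mem_filter, mem_univ, true_and, hf'def]
        rw [min_eq_right hτ₁h.le]
        rcases le_total (f v) τ₁ with hle | hle
        · rw [min_eq_left hle]
          constructor <;> intro h <;> linarith
        · rw [min_eq_right hle]
          constructor <;> intro h <;> linarith
      have hlvl' : ∀ τ, 0 ≤ τ → τ < f' s → vol w (lvl f' τ) ≤ vol w univ / 2 := by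
        intro τ h0 hτ
        rw [hlvlf' τ h0]
        rw [hf's] at hτ
        exact hlvl (τ + τ₁) (by linarith) (by linarith)
      have hm' : 0 < vol w (univ.filter (fun v => f' s ≤ f' v)) := by rw [hM']; exact hm
      have hIH := ih f' hcardf' hf'nn s hf'spos hm' hlvl'
      rw [hM', hlvlf' 0 le_rfl, zero_add, hf's, ← hmdef] at hIH
      set V₁ := vol w (lvl f τ₁) with hV₁def
      have hmV₁ : m ≤ V₁ := vol_mono hw (hMsub τ₁ hτ₁0 hτ₁h)
      have hV₁pos : 0 < V₁ := lt_of_lt_of_le hm hmV₁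
      have hV₁2e : 0 < V₁ ^ (2*ε) := Real.rpow_pos_of_pos hV₁pos _
      have hV₁ne : V₁ ^ (2*ε) ≠ 0 := hV₁2e.ne'
      have hmne : m ^ (2*ε) ≠ 0 := hm2e.ne'
      have hmuV₁ : (V₁ ^ (2*ε))⁻¹ ≤ (m ^ (2*ε))⁻¹ := by
        apply inv_anti₀ hm2e
        exact Real.rpow_le_rpow hm.le hmV₁ (by linarith)
      have hD₁pos : 0 < 4*(q*(m^(2*ε))⁻¹ - (V₁^(2*ε))⁻¹)/(c^2*(q-1)) := by
        apply div_pos _ hcden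
        nlinarith [hmuV₁, inv_pos.mpr hm2e]
      have hapos : (0:ℝ) < 4 / (c^2 * V₀^(2*ε)) := by positivity
      have hcomb := harm_cs hapos hD₁pos hEgnn (En_nonneg hw f') hEg hIH
      rw [show τ₁ + (f s - τ₁) = f s by ring] at hcomb
      have hkey : q * (V₀^(2*ε))⁻¹ ≤ (V₁^(2*ε))⁻¹ := by
        have hhalf : V₁ ^ (2*ε) ≤ V₀^(2*ε) / q := by
          have h1 : V₁ ^ (2*ε) ≤ (V₀/2) ^ (2*ε) :=
            Real.rpow_le_rpow hV₁pos.le hτ₁vol (by linarith)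
          have h2 : (V₀/2) ^ (2*ε) = V₀^(2*ε) / q := by
            rw [Real.div_rpow hV₀pos.le (by norm_num : (0:ℝ) ≤ 2), hqdef, two_rpow_twoeps]
          linarith [h1, h2.le, h2.ge]
        have h3 : (V₀^(2*ε)/q)⁻¹ ≤ (V₁^(2*ε))⁻¹ := inv_anti₀ hV₁2e hhalf
        have h4 : (V₀^(2*ε)/q)⁻¹ = q * (V₀^(2*ε))⁻¹ := by
          rw [inv_div, div_eq_mul_inv, mul_comm]
        linarith [h3, h4.le, h4.ge]
      have hsum_le : 4 / (c^2 * V₀^(2*ε)) + 4*(q*(m^(2*ε))⁻¹ - (V₁^(2*ε))⁻¹)/(c^2*(q-1))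
          ≤ 4 * (q * (m ^ (2*ε))⁻¹ - (V₀ ^ (2*ε))⁻¹) / (c^2 * (q - 1)) := by
        rw [← sub_nonneg]
        have e : 4 * (q * (m ^ (2*ε))⁻¹ - (V₀ ^ (2*ε))⁻¹) / (c^2 * (q - 1))
            - (4 / (c^2 * V₀^(2*ε)) + 4*(q*(m^(2*ε))⁻¹ - (V₁^(2*ε))⁻¹)/(c^2*(q-1)))
            = 4 * ((V₁^(2*ε))⁻¹ - q * (V₀^(2*ε))⁻¹) / (c^2*(q-1)) := by
          field_simp
          ring
        rw [e]
        apply div_nonneg _ hcden.le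
        linarith [hkey]
      calc (f s)^2 ≤ (En w g + En w f') *
            (4 / (c^2 * V₀^(2*ε)) + 4*(q*(m^(2*ε))⁻¹ - (V₁^(2*ε))⁻¹)/(c^2*(q-1))) := hcomb
        _ ≤ En w f * (4 * (q * (m ^ (2*ε))⁻¹ - (V₀ ^ (2*ε))⁻¹) / (c^2 * (q - 1))) := by
            apply mul_le_mul hEsplit hsum_le (by linarith [hapos, hD₁pos]) (En_nonneg hw f)

lemma q_ge_one_add {ε : ℝ} (hε : 0 < ε) : 1 + ε ≤ (4:ℝ)^ε := by
  have hlog : 1 ≤ Real.log 4 := by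
    rw [Real.le_log_iff_exp_le (by norm_num : (0:ℝ) < 4)]
    have := Real.exp_one_lt_d9
    linarith
  have hexp := Real.add_one_le_exp (Real.log 4 * ε)
  rw [Real.rpow_def_of_pos (by norm_num : (0:ℝ) < 4)]
  nlinarith [hexp, hlog, hε.le]

lemma energy_lb (hw : GoodW w) (hc : 0 < c) (hε : 0 < ε) (hε2 : ε ≤ 1/2)
    (Hc : ∀ S : Finset V, S.Nonempty → vol w S ≤ vol w univ / 2 →
      c * vol w S ^ ((1:ℝ)/2 + ε) ≤ cutW w S)
    (f : V → ℝ) (hf : ∀ v, 0 ≤ f v) (s : V) (hds : 0 < deg w s)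
    (hlvl : ∀ τ, 0 ≤ τ → τ < f s → vol w (lvl f τ) ≤ vol w univ / 2) :
    ε * c^2 * (deg w s ^ (2*ε)) * (f s)^2 ≤ 8 * En w f := by
  have hq1 : 1 < (4:ℝ)^ε := q_gt_one hε
  have hq2 : (4:ℝ)^ε ≤ 2 := q_le_two hε2
  have hq1ε : 1 + ε ≤ (4:ℝ)^ε := q_ge_one_add hε
  set q := (4:ℝ)^ε with hqdef
  have hd2e : 0 < deg w s ^ (2*ε) := Real.rpow_pos_of_pos hds _
  rcases eq_or_lt_of_le (hf s) with h0 | h0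
  · rw [← h0]
    have := En_nonneg hw f
    nlinarith [this, hd2e]
  · have hsM : s ∈ univ.filter (fun v => f s ≤ f v) := by simp
    have hdm : deg w s ≤ vol w (univ.filter (fun v => f s ≤ f v)) := deg_le_vol hw hsM
    have hm : 0 < vol w (univ.filter (fun v => f s ≤ f v)) := lt_of_lt_of_le hds hdm
    have hmain := main_ind hw hc hε hε2 Hc (psupp f).card f le_rfl hf s h0 hm hlvl
    set m := vol w (univ.filter (fun v => f s ≤ f v)) with hmdef
    have hm2e : 0 < m ^ (2*ε) := Real.rpow_pos_of_pos hm _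
    have hmu_d : (m ^ (2*ε))⁻¹ ≤ (deg w s ^ (2*ε))⁻¹ := by
      apply inv_anti₀ hd2e
      exact Real.rpow_le_rpow hds.le hdm (by linarith)
    have hA : (0:ℝ) ≤ (vol w (lvl f 0) ^ (2*ε))⁻¹ :=
      inv_nonneg.mpr (Real.rpow_nonneg (vol_nonneg hw _) _)
    have hstep : 4 * (q * (m ^ (2*ε))⁻¹ - (vol w (lvl f 0) ^ (2*ε))⁻¹) / (c^2 * (q - 1))
        ≤ 8 * (deg w s ^ (2*ε))⁻¹ / (c^2 * ε) := by
      apply div_le_div₀ (by positivity) ?_ (mul_pos (by positivity) hε) ?_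
      · have him : (0:ℝ) ≤ (m ^ (2*ε))⁻¹ := (inv_pos.mpr hm2e).le
        nlinarith [hmu_d, hA, him]
      · nlinarith [sq_nonneg c, hc]
    have hfinal : (f s)^2 ≤ En w f * (8 * (deg w s ^ (2*ε))⁻¹ / (c^2 * ε)) :=
      le_trans hmain (mul_le_mul_of_nonneg_left hstep (En_nonneg hw f))
    rw [← sub_nonneg]
    have hcne : c ≠ 0 := hc.ne'
    have hεne : ε ≠ 0 := hε.ne'
    have hDne : deg w s ^ (2*ε) ≠ 0 := hd2e.ne'
    have e : 8 * En w f - ε * c^2 * (deg w s ^ (2*ε)) * (f s)^2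
        = (En w f * (8 * (deg w s ^ (2*ε))⁻¹ / (c^2 * ε)) - (f s)^2) * (ε * c^2 * deg w s ^ (2*ε)) := by
      field_simp
    rw [e]
    exact mul_nonneg (by linarith) (by positivity)

/- ### matrix algebra -/

lemma lap_symm (hw : GoodW w) : (lap w)ᵀ = lap w := by
  ext u v
  simp only [lap, Matrix.transpose_apply, Matrix.of_apply]
  by_cases h : u = v
  · subst h; simp
  · rw [if_neg h, if_neg (fun hh => h hh.symm), hw.2.1]

lemma mp_symm {A X : Matrix V V ℝ} (hA : Aᵀ = A) (h : IsMoorePenrose A X) : Xᵀ = X := by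
  obtain ⟨h1, h2, h3, h4⟩ := h
  have e1 : A * Xᵀ = X * A := by
    calc A * Xᵀ = Aᵀ * Xᵀ := by rw [hA]
      _ = (X * A)ᵀ := (Matrix.transpose_mul X A).symm
      _ = X * A := h4
  have e2 : Xᵀ * A = A * X := by
    calc Xᵀ * A = Xᵀ * Aᵀ := by rw [hA]
      _ = (A * X)ᵀ := (Matrix.transpose_mul A X).symm
      _ = A * X := h3
  have hY1 : A * Xᵀ * A = A := by
    have ht : (A * X * A)ᵀ = A * Xᵀ * A := by
      rw [Matrix.transpose_mul, Matrix.transpose_mul, hA]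
      exact (Matrix.mul_assoc A Xᵀ A).symm
    calc A * Xᵀ * A = (A * X * A)ᵀ := ht.symm
      _ = Aᵀ := by rw [h1]
      _ = A := hA
  have hY2 : Xᵀ * A * Xᵀ = Xᵀ := by
    have ht : (X * A * X)ᵀ = Xᵀ * A * Xᵀ := by
      rw [Matrix.transpose_mul, Matrix.transpose_mul, hA]
      exact (Matrix.mul_assoc Xᵀ A Xᵀ).symm
    calc Xᵀ * A * Xᵀ = (X * A * X)ᵀ := ht.symm
      _ = Xᵀ := by rw [h2]
  have sI : A * Xᵀ = A * X := by
    calc A * Xᵀ = X * A := e1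
      _ = X * (A * Xᵀ * A) := by rw [hY1]
      _ = (X * A) * (Xᵀ * A) := by simp only [Matrix.mul_assoc]
      _ = (X * A) * (A * X) := by rw [e2]
      _ = (A * Xᵀ) * (A * X) := by rw [e1]
      _ = (A * Xᵀ * A) * X := by simp only [Matrix.mul_assoc]
      _ = A * X := by rw [hY1]
  have sII : Xᵀ * A = X * A := by
    have := congrArg Matrix.transpose sI
    simp only [Matrix.transpose_mul, Matrix.transpose_transpose, hA] at this
    exact this.symm
  calc Xᵀ = Xᵀ * A * Xᵀ := hY2.symm
    _ = (X * A) * Xᵀ := by rw [sII]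
    _ = X * (A * Xᵀ) := by rw [Matrix.mul_assoc]
    _ = X * (A * X) := by rw [sI]
    _ = X * A * X := by rw [← Matrix.mul_assoc]
    _ = X := h2

lemma lap_mulVec (hw : GoodW w) (f : V → ℝ) (u : V) :
    (lap w *ᵥ f) u = ∑ v, w u v * (f u - f v) := by
  simp only [lap, Matrix.mulVec, dotProduct, Matrix.of_apply]
  have e : ∀ v, (if u = v then deg w u else -(w u v)) * f v
      = (if u = v then (deg w u) * f v else 0) + (-(w u v) * f v) := by
    intro v
    split_ifs with h
    · subst h; rw [hw.2.2]; ring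
    · ring
  simp only [e]
  rw [Finset.sum_add_distrib, Finset.sum_ite_eq univ u (fun v => deg w u * f v)]
  rw [if_pos (mem_univ u), deg, Finset.sum_mul, ← Finset.sum_add_distrib]
  exact Finset.sum_congr rfl (fun v _ => by ring)

lemma lap_quad (hw : GoodW w) (f : V → ℝ) : f ⬝ᵥ (lap w *ᵥ f) = En w f := by
  simp only [dotProduct]
  have e : ∀ u, f u * (lap w *ᵥ f) u = ∑ v, w u v * (f u * (f u - f v)) := by
    intro u
    rw [lap_mulVec hw f u, Finset.mul_sum]
    exact Finset.sum_congr rfl (fun v _ => by ring)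
  simp only [e]
  have swap : ∑ u, ∑ v, w u v * (f u * (f u - f v)) = ∑ u, ∑ v, w u v * (f v * (f v - f u)) := by
    rw [Finset.sum_comm]
    exact Finset.sum_congr rfl (fun v _ => Finset.sum_congr rfl (fun u _ => by rw [hw.2.1]))
  have comb : (∑ u, ∑ v, w u v * (f u * (f u - f v)))
      + (∑ u, ∑ v, w u v * (f v * (f v - f u))) = ∑ u, ∑ v, w u v * (f u - f v)^2 := by
    rw [← Finset.sum_add_distrib]
    refine Finset.sum_congr rfl (fun u _ => ?_)
    rw [← Finset.sum_add_distrib]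
    exact Finset.sum_congr rfl (fun v _ => by ring)
  rw [En]
  linarith [swap, comb]

lemma single_sub_dot (g : V → ℝ) (s t : V) :
    (Pi.single s 1 - Pi.single t 1 : V → ℝ) ⬝ᵥ g = g s - g t := by
  simp only [dotProduct, Pi.sub_apply, Pi.single_apply, sub_mul, ite_mul, one_mul, zero_mul]
  rw [Finset.sum_sub_distrib, Finset.sum_ite_eq' univ s g, Finset.sum_ite_eq' univ t g]
  simp

lemma En_contract (hw : GoodW w) {F g : V → ℝ}
    (h : ∀ u v, |F u - F v| ≤ |g u - g v|) : En w F ≤ En w g := by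
  have hsum : ∑ u, ∑ v, w u v * (F u - F v)^2 ≤ ∑ u, ∑ v, w u v * (g u - g v)^2 :=
    Finset.sum_le_sum fun u _ => Finset.sum_le_sum fun v _ => by
      apply mul_le_mul_of_nonneg_left _ (hw.1 u v)
      have hv := h u v
      calc (F u - F v)^2 = |F u - F v|^2 := (sq_abs _).symm
        _ ≤ |g u - g v|^2 := by
            nlinarith [abs_nonneg (F u - F v), abs_nonneg (g u - g v), hv]
        _ = (g u - g v)^2 := sq_abs _
  simp only [En]
  linarith

lemma deg_pos_of_conn (hw : GoodW w) (hconn : Conn w)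
    (hvol : 0 < vol w (univ : Finset V)) (s : V) : 0 < deg w s := by
  by_contra hds
  push_neg at hds
  have hdz : deg w s = 0 := le_antisymm hds (deg_nonneg hw s)
  have hws : ∀ u, w s u = 0 := by
    intro u
    have := (Finset.sum_eq_zero_iff_of_nonneg (fun u _ => hw.1 s u)).mp hdz
    exact this u (mem_univ u)
  have hex : ∃ v, 0 < deg w v := by
    by_contra hall
    push_neg at hall
    have : vol w univ ≤ 0 := Finset.sum_nonpos (fun v _ => hall v)
    linarith
  obtain ⟨v, hv⟩ := hex
  have hvs : v ≠ s := fun h => by rw [h, hdz] at hv; exact lt_irrefl 0 hv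
  obtain ⟨p⟩ := hconn.preconnected v s
  cases hp : p.reverse with
  | nil => exact hvs rfl
  | cons h q =>
    rename_i x
    simp only [SimpleGraph.fromRel_adj] at h
    rcases h.2 with h' | h'
    · rw [hws x] at h'
      exact lt_irrefl 0 h'
    · rw [hw.2.1 x s, hws x] at h'
      exact lt_irrefl 0 h'

lemma mulVec_dot (M : Matrix V V ℝ) (x y : V → ℝ) :
    (M *ᵥ x) ⬝ᵥ y = x ⬝ᵥ (Mᵀ *ᵥ y) := by
  rw [Matrix.mulVec_transpose, dotProduct_comm (M *ᵥ x) y,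
    Matrix.dotProduct_mulVec, dotProduct_comm]

/-- mild expansion implies bounded effective resistance: there is a
universal constant `C` such that for every connected weighted graph in which every
candidate set `S` satisfies `Φ(S) ≥ c / vol(S)^{1/2-ε}`, every pair `s, t` has
`Reff(s,t) ≤ C · (deg(s)^{-2ε} + deg(t)^{-2ε}) / (ε c²)`. -/
theorem mild_expansion_implies_reff_bound :
    ∃ C : ℝ, 0 < C ∧
      ∀ (V : Type) [Fintype V] [DecidableEq V]
        (w : V → V → ℝ) (Ld : Matrix V V ℝ) (c ε : ℝ),
        GoodW w → Conn w → IsMoorePenrose (lap w) Ld →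
        0 < c → 0 < ε → ε ≤ 1 / 2 →
        (∀ S : Finset V, S.Nonempty → vol w S ≤ vol w Finset.univ / 2 →
          c / vol w S ^ ((1 : ℝ) / 2 - ε) ≤ cutW w S / vol w S) →
        ∀ s t : V,
          reff Ld s t ≤
            C * (deg w s ^ (-(2 : ℝ) * ε) + deg w t ^ (-(2 : ℝ) * ε)) / (ε * c ^ 2) := by
  classical
  refine ⟨16, by norm_num, ?_⟩
  intro V _ _ w Ld c ε hw hconn hmp hc hε hε2 hΦ s t
  have hRHSnn : 0 ≤ 16 * (deg w s ^ (-(2:ℝ)*ε) + deg w t ^ (-(2:ℝ)*ε)) / (ε * c^2) := by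
    apply div_nonneg _ (by positivity)
    have h1 : (0:ℝ) ≤ deg w s ^ (-(2:ℝ)*ε) := Real.rpow_nonneg (deg_nonneg hw s) _
    have h2 : (0:ℝ) ≤ deg w t ^ (-(2:ℝ)*ε) := Real.rpow_nonneg (deg_nonneg hw t) _
    linarith
  by_cases hvol0 : vol w (univ : Finset V) ≤ 0
  · have hvz : vol w (univ : Finset V) = 0 := le_antisymm hvol0 (vol_nonneg hw univ)
    have hwz : ∀ u v, w u v = 0 := by
      intro u v
      have h1 : ∑ x : V, deg w x = 0 := hvz
      have h2 := (Finset.sum_eq_zero_iff_of_nonneg (fun x _ => deg_nonneg hw x)).mp h1 u (mem_univ u)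
      exact (Finset.sum_eq_zero_iff_of_nonneg (fun x _ => hw.1 u x)).mp h2 v (mem_univ v)
    have hlap0 : lap w = 0 := by
      ext u v
      simp only [lap, Matrix.of_apply, Matrix.zero_apply]
      split_ifs with h
      · simp [deg, hwz]
      · simp [hwz]
    have hLd0 : Ld = 0 := by
      have h2 := hmp.2.1
      rw [hlap0] at h2
      simpa using h2.symm
    simp only [reff, hLd0, Matrix.zero_mulVec, dotProduct_zero]
    exact hRHSnn
  push_neg at hvol0
  have Hc : ∀ S : Finset V, S.Nonempty → vol w S ≤ vol w univ / 2 →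
      c * vol w S ^ ((1:ℝ)/2 + ε) ≤ cutW w S := by
    intro S hS hS2
    have hΦS := hΦ S hS hS2
    rcases eq_or_lt_of_le (vol_nonneg hw S) with hv0 | hv0
    · rw [← hv0, Real.zero_rpow (by linarith : (1:ℝ)/2 + ε ≠ 0), mul_zero]
      exact cutW_nonneg hw S
    · have hvpow : 0 < vol w S ^ ((1:ℝ)/2 - ε) := Real.rpow_pos_of_pos hv0 _
      rw [div_le_div_iff₀ hvpow hv0] at hΦS
      have hsplit : vol w S ^ ((1:ℝ)/2+ε) * vol w S ^ ((1:ℝ)/2-ε) = vol w S := by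
        rw [← Real.rpow_add hv0, show (1:ℝ)/2+ε+((1:ℝ)/2-ε) = 1 by ring, Real.rpow_one]
      have hmul : c * (vol w S ^ ((1:ℝ)/2+ε)) * (vol w S ^ ((1:ℝ)/2-ε))
          ≤ cutW w S * (vol w S ^ ((1:ℝ)/2-ε)) := by
        rw [mul_assoc, hsplit]
        exact hΦS
      exact le_of_mul_le_mul_right hmul hvpow
  have hds : 0 < deg w s := deg_pos_of_conn hw hconn hvol0 s
  have hdt : 0 < deg w t := deg_pos_of_conn hw hconn hvol0 t
  set b := (Pi.single s 1 - Pi.single t 1 : V → ℝ) with hbdef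
  set g := Ld *ᵥ b with hgdef
  have hsym : Ldᵀ = Ld := mp_symm (lap_symm hw) hmp
  have hR : reff Ld s t = b ⬝ᵥ g := rfl
  have hRst : reff Ld s t = g s - g t := by rw [hR]; exact single_sub_dot g s t
  have hEg : En w g = reff Ld s t := by
    rw [hR]
    calc En w g = g ⬝ᵥ (lap w *ᵥ g) := (lap_quad hw g).symm
      _ = g ⬝ᵥ ((lap w * Ld) *ᵥ b) := by rw [hgdef, Matrix.mulVec_mulVec]
      _ = (Ld *ᵥ b) ⬝ᵥ ((lap w * Ld) *ᵥ b) := by rw [hgdef]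
      _ = b ⬝ᵥ (Ldᵀ *ᵥ ((lap w * Ld) *ᵥ b)) := mulVec_dot Ld b _
      _ = b ⬝ᵥ ((Ldᵀ * (lap w * Ld)) *ᵥ b) := by rw [Matrix.mulVec_mulVec]
      _ = b ⬝ᵥ ((Ld * lap w * Ld) *ᵥ b) := by rw [hsym, Matrix.mul_assoc]
      _ = b ⬝ᵥ (Ld *ᵥ b) := by rw [hmp.2.1]
  rcases le_or_gt (reff Ld s t) 0 with hR0 | hR0
  · linarith [hRHSnn]
  set R := reff Ld s t with hRdef
  have huniv_ne : (univ : Finset V).Nonempty := ⟨s, mem_univ s⟩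
  set Fg := univ.image g with hFgdef
  have hFgne : Fg.Nonempty := huniv_ne.image g
  have htop : lvl g (Fg.max' hFgne) = ∅ := by
    rw [Finset.eq_empty_iff_forall_notMem]
    intro v hv
    simp only [lvl, mem_filter, mem_univ, true_and] at hv
    exact absurd (Fg.le_max' (g v) (mem_image_of_mem g (mem_univ v))) (not_le.mpr hv)
  set FR := Fg.filter (fun a => vol w (lvl g a) ≤ vol w univ / 2) with hFRdef
  have hFRne : FR.Nonempty := by
    refine ⟨Fg.max' hFgne, mem_filter.mpr ⟨Fg.max'_mem hFgne, ?_⟩⟩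
    have h0 : vol w (∅ : Finset V) = 0 := by simp [vol]
    rw [htop, h0]
    linarith
  set ρ := FR.min' hFRne with hρdef
  have hρmem := mem_filter.mp (FR.min'_mem hFRne)
  have hρtop : vol w (lvl g ρ) ≤ vol w univ / 2 := hρmem.2
  have hρbot : ∀ τ, τ < ρ → vol w univ / 2 < vol w (lvl g τ) := by
    intro τ hτ
    by_contra hcon
    push_neg at hcon
    by_cases hne : (Fg.filter (fun x => x ≤ τ)).Nonempty
    · set a := (Fg.filter (fun x => x ≤ τ)).max' hne with hadef
      have hamem := mem_filter.mp ((Fg.filter (fun x => x ≤ τ)).max'_mem hne)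
      have haeq : lvl g a = lvl g τ := by
        ext v
        simp only [lvl, mem_filter, mem_univ, true_and]
        constructor
        · intro hlt
          by_contra hc2
          push_neg at hc2
          have hmem2 : g v ∈ Fg.filter (fun x => x ≤ τ) :=
            mem_filter.mpr ⟨mem_image_of_mem g (mem_univ v), hc2⟩
          exact absurd ((Fg.filter (fun x => x ≤ τ)).le_max' _ hmem2) (not_le.mpr hlt)
        · intro hlt; exact lt_of_le_of_lt hamem.2 hlt
      have haFR : a ∈ FR := mem_filter.mpr ⟨hamem.1, by rw [haeq]; exact hcon⟩
      have := FR.min'_le a haFR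
      linarith [hamem.2]
    · rw [Finset.not_nonempty_iff_eq_empty, Finset.filter_eq_empty_iff] at hne
      have huniv : lvl g τ = univ := by
        rw [Finset.eq_univ_iff_forall]
        intro v
        simp only [lvl, mem_filter, mem_univ, true_and]
        exact not_le.mp (hne (mem_image_of_mem g (mem_univ v)))
      rw [huniv] at hcon
      linarith
  have hbelow : ∀ σ, σ ≤ ρ → vol w (univ.filter (fun v => g v < σ)) ≤ vol w univ / 2 := by
    intro σ hσ
    by_cases hne : (univ.filter (fun v => g v < σ)).Nonempty
    · set B := univ.filter (fun v => g v < σ) with hBdef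
      have hBim : (B.image g).Nonempty := hne.image g
      set a := (B.image g).max' hBim with hadef
      obtain ⟨v₀, hv₀B, hv₀⟩ := Finset.mem_image.mp ((B.image g).max'_mem hBim)
      have haσ : a < σ := by rw [hadef, ← hv₀]; exact (mem_filter.mp hv₀B).2
      have hBeq : B = (lvl g a)ᶜ := by
        ext v
        simp only [hBdef, lvl, mem_filter, mem_univ, true_and, Finset.mem_compl, not_lt]
        constructor
        · intro h
          exact (B.image g).le_max' _ (mem_image_of_mem g (mem_filter.mpr ⟨mem_univ v, h⟩))
        · intro h; exact lt_of_le_of_lt h haσ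
      have hpart := vol_add_compl (w := w) (lvl g a)
      have hbig := hρbot a (lt_of_lt_of_le haσ hσ)
      rw [hBeq]
      linarith
    · rw [Finset.not_nonempty_iff_eq_empty] at hne
      have h0 : vol w (∅ : Finset V) = 0 := by simp [vol]
      rw [hne, h0]
      linarith
  set f₁ := fun v => max (g v - ρ) 0 with hf₁def
  set f₂ := fun v => max (ρ - g v) 0 with hf₂def
  have hf₁nn : ∀ v, 0 ≤ f₁ v := fun v => le_max_right _ _
  have hf₂nn : ∀ v, 0 ≤ f₂ v := fun v => le_max_right _ _
  have hlvl₁ : ∀ τ, 0 ≤ τ → τ < f₁ s → vol w (lvl f₁ τ) ≤ vol w univ / 2 := by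
    intro τ h0 _
    have heq : lvl f₁ τ = lvl g (ρ + τ) := by
      ext v
      simp only [lvl, mem_filter, mem_univ, true_and, hf₁def, lt_max_iff]
      constructor
      · rintro (h | h)
        · linarith
        · linarith
      · intro h; left; linarith
    rw [heq]
    exact le_trans (vol_mono hw (lvl_mono g (by linarith))) hρtop
  have hlvl₂ : ∀ τ, 0 ≤ τ → τ < f₂ t → vol w (lvl f₂ τ) ≤ vol w univ / 2 := by
    intro τ h0 _
    have heq : lvl f₂ τ = univ.filter (fun v => g v < ρ - τ) := by
      ext v
      simp only [lvl, mem_filter, mem_univ, true_and, hf₂def, lt_max_iff]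
      constructor
      · rintro (h | h)
        · linarith
        · linarith
      · intro h; left; linarith
    rw [heq]
    exact hbelow (ρ - τ) (by linarith)
  have hcon₁ : En w f₁ ≤ En w g := by
    apply En_contract hw
    intro u v
    simp only [hf₁def]
    calc |max (g u - ρ) 0 - max (g v - ρ) 0| ≤ |(g u - ρ) - (g v - ρ)| :=
        abs_max_sub_max_le_abs _ _ _
      _ = |g u - g v| := by rw [show (g u - ρ) - (g v - ρ) = g u - g v by ring]
  have hcon₂ : En w f₂ ≤ En w g := by
    apply En_contract hw
    intro u v
    simp only [hf₂def]
    calc |max (ρ - g u) 0 - max (ρ - g v) 0| ≤ |(ρ - g u) - (ρ - g v)| :=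
        abs_max_sub_max_le_abs _ _ _
      _ = |g u - g v| := by rw [show (ρ - g u) - (ρ - g v) = -(g u - g v) by ring, abs_neg]
  have hE₁ := energy_lb hw hc hε hε2 Hc f₁ hf₁nn s hds hlvl₁
  have hE₂ := energy_lb hw hc hε hε2 Hc f₂ hf₂nn t hdt hlvl₂
  set x := f₁ s with hxdef
  set y := f₂ t with hydef
  have hxy : R ≤ x + y := by
    calc R = (g s - ρ) + (ρ - g t) := by rw [hRst]; ring
      _ ≤ x + y := add_le_add (le_max_left _ _) (le_max_left _ _)
  set Ds := deg w s ^ (2*ε) with hDs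
  set Dt := deg w t ^ (2*ε) with hDt
  have hDs0 : 0 < Ds := Real.rpow_pos_of_pos hds _
  have hDt0 : 0 < Dt := Real.rpow_pos_of_pos hdt _
  have hB₁ : ε*c^2*Ds*x^2 ≤ 8*R := by
    have h8 : 8 * En w f₁ ≤ 8 * R := by
      have := hEg
      linarith [hcon₁]
    linarith [hE₁]
  have hB₂ : ε*c^2*Dt*y^2 ≤ 8*R := by
    have h8 : 8 * En w f₂ ≤ 8 * R := by
      have := hEg
      linarith [hcon₂]
    linarith [hE₂]
  have hxnn : 0 ≤ x := hf₁nn s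
  have hynn : 0 ≤ y := hf₂nn t
  have hR2 : R^2 ≤ (x+y)^2 := pow_le_pow_left₀ hR0.le hxy 2
  have hps : 0 < ε*c^2*Ds := by positivity
  have hpt : 0 < ε*c^2*Dt := by positivity
  have hx2 : x^2 ≤ 8*R*(ε*c^2*Ds)⁻¹ := by
    rw [← div_eq_mul_inv, le_div_iff₀ hps]
    linarith [hB₁]
  have hy2 : y^2 ≤ 8*R*(ε*c^2*Dt)⁻¹ := by
    rw [← div_eq_mul_inv, le_div_iff₀ hpt]
    linarith [hB₂]
  have hsq : R^2 ≤ 16*R*((ε*c^2*Ds)⁻¹ + (ε*c^2*Dt)⁻¹) := by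
    nlinarith [hx2, hy2, hR2, hxnn, hynn, sq_nonneg (x-y)]
  have hfin : R ≤ 16*((ε*c^2*Ds)⁻¹ + (ε*c^2*Dt)⁻¹) := by
    nlinarith [hsq, hR0]
  have hgoal_eq : 16 * (deg w s ^ (-(2:ℝ)*ε) + deg w t ^ (-(2:ℝ)*ε)) / (ε * c^2)
      = 16*((ε*c^2*Ds)⁻¹ + (ε*c^2*Dt)⁻¹) := by
    rw [show -(2:ℝ)*ε = -(2*ε) by ring, Real.rpow_neg (deg_nonneg hw s),
      Real.rpow_neg (deg_nonneg hw t), ← hDs, ← hDt]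
    field_simp
  rw [hgoal_eq]
  exact hfin
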